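/- Fix b, h > 0 and (b', h') ∈ (0, b) × (0, h). Then p^{(λ)}((b,h),(b',h')) converges, as λ → ∞, to p^{(∞)}((b,h),(b',h')) = (4(b − b')b'/h'²)·exp(−(2/3)·b³·(1/h' − 1/h)). In particular, for all sufficiently large λ the point (b', h') belongs to S_{(b,h)}. -/

import Mathlib

open Real Filter

/-- The set `S_{(b,h)}` of admissible new couples `(b', h')`. -/
def Sset (lam b h : ℝ) : Set (ℝ × ℝ) :=
  {p | 0 < p.1 ∧ p.1 < b ∧
    lam ^ (-(2 : ℝ) / 3) * Real.sqrt (b ^ 2 - p.1 ^ 2) < p.2 ∧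
    p.2 < Real.sqrt (h ^ 2 + lam ^ (-(4 : ℝ) / 3) * (b ^ 2 - p.1 ^ 2))}

/-- The area `A_λ = |Δ_n^{(λ)}|₂` of the difference of two circular caps. -/
noncomputable def Alam (lam b h b' h' : ℝ) : ℝ :=
  (lam ^ 2 * h' ^ 2 + lam ^ ((2 : ℝ) / 3) * b' ^ 2) *
      (Real.arctan (lam ^ ((1 : ℝ) / 3) * b /
          Real.sqrt (lam ^ 2 * h' ^ 2 - lam ^ ((2 : ℝ) / 3) * (b ^ 2 - b' ^ 2))) -
        lam ^ ((1 : ℝ) / 3) * b *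
          Real.sqrt (lam ^ 2 * h' ^ 2 - lam ^ ((2 : ℝ) / 3) * (b ^ 2 - b' ^ 2)) /
          (lam ^ 2 * h' ^ 2 + lam ^ ((2 : ℝ) / 3) * b' ^ 2)) -
    (lam ^ 2 * h ^ 2 + lam ^ ((2 : ℝ) / 3) * b ^ 2) *
      (Real.arctan (lam ^ (-(2 : ℝ) / 3) * b / h) -
        lam ^ (-(2 : ℝ) / 3) * (b / h) * (1 + lam ^ (-(4 : ℝ) / 3) * b ^ 2 / h ^ 2)⁻¹)

/-- The transition density `p^{(λ)}((b,h),(b',h'))`. -/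
noncomputable def plam (lam b h b' h' : ℝ) : ℝ :=
  4 * b' / (h' ^ 2 + lam ^ (-(4 : ℝ) / 3) * b' ^ 2) *
    (b * (1 - lam ^ (-(4 : ℝ) / 3) * (b ^ 2 - b' ^ 2) / h' ^ 2) ^ (-(1 : ℝ) / 2) - b') *
    Real.exp (-Alam lam b h b' h') *
    Set.indicator (Sset lam b h) (fun _ => 1) (b', h')

/-!
Substituting `λ = ε⁻³` turns every fractional power of `λ` into an integer power of `ε`, and
`λ → ∞` into `ε → 0⁺`. With `s = √(h'² - ε⁴(b² - b'²))`, both cap terms of `A_λ` have the form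
`(k/ε³)² (1 + x²) (arctan x - x/(1 + x²))` with `x = ε² b / k` (`k = s`, resp. `k = h`), which is
`b³/k · capProfile x`, where `capProfile x = ((1 + x²) arctan x - x) / x³ → 2/3` as `x → 0`
(l'Hôpital). Hence `A_λ → (2/3) b³ (1/h' - 1/h)`; the prefactor of `p^{(λ)}` is continuous at
`ε = 0`, and membership in `S_{(b,h)}` reduces to two strict inequalities that hold at `ε = 0`.
-/

open Topology

noncomputable def capProfile (x : ℝ) : ℝ := ((1 + x ^ 2) * arctan x - x) / x ^ 3

theorem tendsto_arctan_div_self : Tendsto (fun x => arctan x / x) (𝓝[≠] 0) (𝓝 1) := by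
  simpa [slope_fun_def, div_eq_inv_mul] using (hasDerivAt_arctan 0).tendsto_slope

theorem tendsto_capProfile : Tendsto capProfile (𝓝[≠] 0) (𝓝 (2 / 3)) := by
  have hf : ∀ x, HasDerivAt (fun x => (1 + x ^ 2) * arctan x - x) (2 * x * arctan x) x := by
    intro x
    refine ((((hasDerivAt_pow 2 x).const_add 1).mul (hasDerivAt_arctan x)).sub
      (hasDerivAt_id' x)).congr_deriv ?_
    field_simp
    ring
  have hg : ∀ x : ℝ, HasDerivAt (fun x => x ^ 3) (3 * x ^ 2) x := fun x => by
    simpa using hasDerivAt_pow 3 x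
  refine HasDerivAt.lhopital_zero_nhdsNE (.of_forall hf) (.of_forall hg) ?_ ?_ ?_ ?_
  · filter_upwards [self_mem_nhdsWithin] with x hx using by simpa using hx
  · exact tendsto_nhdsWithin_of_tendsto_nhds (by simpa using (hf 0).continuousAt.tendsto)
  · exact tendsto_nhdsWithin_of_tendsto_nhds (by simpa using (hg 0).continuousAt.tendsto)
  · have := tendsto_arctan_div_self.const_mul (2 / 3)
    rw [mul_one] at this
    refine this.congr' ?_
    filter_upwards [self_mem_nhdsWithin] with x (hx : x ≠ 0)
    rw [eq_div_iff (by positivity)]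
    field_simp

theorem tendsto_div_mul_capProfile {k : ℝ → ℝ} {k₀ b : ℝ} (hk : Tendsto k (𝓝[>] 0) (𝓝 k₀))
    (hk₀ : 0 < k₀) (hb : b ≠ 0) :
    Tendsto (fun ε => b ^ 3 / k ε * capProfile (ε ^ 2 * b / k ε)) (𝓝[>] 0)
      (𝓝 (b ^ 3 / k₀ * (2 / 3))) := by
  have hx : Tendsto (fun ε : ℝ => ε ^ 2 * b / k ε) (𝓝[>] 0) (𝓝[≠] 0) := by
    refine tendsto_nhdsWithin_of_tendsto_nhds_of_eventually_within _ ?_ ?_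
    · have hsq : Tendsto (fun ε : ℝ => ε ^ 2) (𝓝[>] 0) (𝓝 0) :=
        tendsto_nhdsWithin_of_tendsto_nhds (by simpa using (continuous_pow 2).tendsto (0 : ℝ))
      have := (hsq.mul_const b).div hk hk₀.ne'
      rwa [zero_mul, zero_div] at this
    · filter_upwards [self_mem_nhdsWithin, hk.eventually_ne hk₀.ne'] with ε (hε : 0 < ε) hkε
      simp [hε.ne', hb, hkε]
  exact (tendsto_const_nhds.div hk hk₀.ne').mul (tendsto_capProfile.comp hx)

theorem map_inv_pow_three_nhdsGT_zero : map (fun ε : ℝ => (ε ^ 3)⁻¹) (𝓝[>] 0) = atTop := by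
  have hφ : Tendsto (fun ε : ℝ => (ε ^ 3)⁻¹) (𝓝[>] 0) atTop :=
    tendsto_inv_nhdsGT_zero.comp <| tendsto_nhdsWithin_of_tendsto_nhds_of_eventually_within _
      (by simpa using ((continuous_pow 3).tendsto (0 : ℝ)).mono_left nhdsWithin_le_nhds)
      (by filter_upwards [self_mem_nhdsWithin] with ε (hε : 0 < ε) using pow_pos hε 3)
  have hψ : Tendsto (fun lam : ℝ => lam ^ (-(3 : ℝ)⁻¹)) atTop (𝓝[>] 0) :=
    tendsto_nhdsWithin_of_tendsto_nhds_of_eventually_within _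
      (tendsto_rpow_neg_atTop (by norm_num))
      (by filter_upwards [eventually_gt_atTop 0] with lam hlam using Real.rpow_pos_of_pos hlam _)
  refine le_antisymm hφ ?_
  calc atTop = map ((fun ε : ℝ => (ε ^ 3)⁻¹) ∘ fun lam : ℝ => lam ^ (-(3 : ℝ)⁻¹)) atTop := by
        rw [Filter.map_congr (m₂ := id), Filter.map_id]
        filter_upwards [eventually_gt_atTop 0] with lam hlam
        simpa [Real.rpow_neg hlam.le] using Real.rpow_inv_natCast_pow (n := 3) hlam.le (by norm_num)
    _ ≤ _ := by rw [← Filter.map_map]; exact map_mono hψ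

theorem inv_pow_three_rpow {ε : ℝ} (hε : 0 < ε) (n : ℤ) :
    ((ε ^ 3)⁻¹) ^ ((n : ℝ) / 3) = ε ^ (-n) := by
  rw [← Real.rpow_natCast, ← Real.rpow_neg hε.le, ← Real.rpow_mul hε.le,
    show -((3 : ℕ) : ℝ) * (n / 3) = ((-n : ℤ) : ℝ) by push_cast; ring, Real.rpow_intCast]

theorem inv_pow_three_rpow_thirds {ε : ℝ} (hε : 0 < ε) :
    ((ε ^ 3)⁻¹) ^ ((1 : ℝ) / 3) = ε⁻¹ ∧ ((ε ^ 3)⁻¹) ^ ((2 : ℝ) / 3) = (ε ^ 2)⁻¹ ∧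
      ((ε ^ 3)⁻¹) ^ (-(2 : ℝ) / 3) = ε ^ 2 ∧ ((ε ^ 3)⁻¹) ^ (-(4 : ℝ) / 3) = ε ^ 4 := by
  have h1 := inv_pow_three_rpow hε 1
  have h2 := inv_pow_three_rpow hε 2
  have hm2 := inv_pow_three_rpow hε (-2)
  have hm4 := inv_pow_three_rpow hε (-4)
  push_cast at h1 h2 hm2 hm4
  simp only [zpow_neg, zpow_ofNat, pow_one] at h1 h2 hm2 hm4
  exact ⟨h1, h2, hm2, hm4⟩

theorem eventually_mem_Sset_inv_pow_three {b h b' h' : ℝ} (hb' : 0 < b') (hb'b : b' < b)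
    (hh' : 0 < h') (hh'h : h' < h) : ∀ᶠ ε in 𝓝[>] 0, (b', h') ∈ Sset (ε ^ 3)⁻¹ b h := by
  have hlow : ∀ᶠ ε : ℝ in 𝓝 0, ε ^ 2 * √(b ^ 2 - b' ^ 2) < h' :=
    (by fun_prop : Continuous fun ε : ℝ => ε ^ 2 * √(b ^ 2 - b' ^ 2)).continuousAt.eventually_lt
      continuousAt_const (by simpa using hh')
  have hup : ∀ᶠ ε : ℝ in 𝓝 0, h' < √(h ^ 2 + ε ^ 4 * (b ^ 2 - b' ^ 2)) :=
    continuousAt_const.eventually_lt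
      (by fun_prop : Continuous fun ε : ℝ => √(h ^ 2 + ε ^ 4 * (b ^ 2 - b' ^ 2))).continuousAt
      (by simpa [Real.sqrt_sq_eq_abs] using hh'h.trans_le (le_abs_self h))
  filter_upwards [nhdsWithin_le_nhds hlow, nhdsWithin_le_nhds hup, self_mem_nhdsWithin]
    with ε hεlow hεup (hε : 0 < ε)
  obtain ⟨-, -, hm2, hm4⟩ := inv_pow_three_rpow_thirds hε
  exact ⟨hb', hb'b, by rwa [hm2], by rwa [hm4]⟩

theorem Alam_inv_pow_three {ε b h b' h' : ℝ} (hε : 0 < ε) (hb : 0 < b) (hh : 0 < h)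
    (hs : ε ^ 4 * (b ^ 2 - b' ^ 2) < h' ^ 2) :
    Alam (ε ^ 3)⁻¹ b h b' h' =
      b ^ 3 / √(h' ^ 2 - ε ^ 4 * (b ^ 2 - b' ^ 2)) *
          capProfile (ε ^ 2 * b / √(h' ^ 2 - ε ^ 4 * (b ^ 2 - b' ^ 2))) -
        b ^ 3 / h * capProfile (ε ^ 2 * b / h) := by
  obtain ⟨h1, h2, hm2, hm4⟩ := inv_pow_three_rpow_thirds hε
  set s := √(h' ^ 2 - ε ^ 4 * (b ^ 2 - b' ^ 2))
  have hs0 : 0 < s := Real.sqrt_pos.2 (by linarith)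
  have hs2 : s ^ 2 = h' ^ 2 - ε ^ 4 * (b ^ 2 - b' ^ 2) := Real.sq_sqrt (by linarith)
  have hsqrt : √(((ε ^ 3)⁻¹) ^ 2 * h' ^ 2 - (ε ^ 2)⁻¹ * (b ^ 2 - b' ^ 2)) = s / ε ^ 3 := by
    rw [← Real.sqrt_sq (by positivity : 0 ≤ s / ε ^ 3), div_pow, hs2]
    field_simp
  have hx : ε⁻¹ * b / (s / ε ^ 3) = ε ^ 2 * b / s := by
    field_simp
  unfold Alam capProfile
  rw [h1, h2, hm2, hm4, hsqrt, hx]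
  generalize arctan (ε ^ 2 * b / s) = A₁
  generalize arctan (ε ^ 2 * b / h) = A₂
  rw [show h' ^ 2 = s ^ 2 + ε ^ 4 * (b ^ 2 - b' ^ 2) by linear_combination -hs2]
  have hD : ((ε ^ 3)⁻¹) ^ 2 * (s ^ 2 + ε ^ 4 * (b ^ 2 - b' ^ 2)) + (ε ^ 2)⁻¹ * b' ^ 2 =
      (s ^ 2 + ε ^ 4 * b ^ 2) / ε ^ 6 := by
    field_simp
    ring
  rw [hD, mul_sub _ A₁, mul_div_cancel₀ _ (by positivity)]
  field_simp

theorem tendsto_Alam_inv_pow_three {b h b' h' : ℝ} (hb : 0 < b) (hh : 0 < h) (hh' : 0 < h') :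
    Tendsto (fun ε => Alam (ε ^ 3)⁻¹ b h b' h') (𝓝[>] 0)
      (𝓝 (2 / 3 * b ^ 3 * (1 / h' - 1 / h))) := by
  have hs : Tendsto (fun ε : ℝ => √(h' ^ 2 - ε ^ 4 * (b ^ 2 - b' ^ 2))) (𝓝[>] 0) (𝓝 h') := by
    refine tendsto_nhdsWithin_of_tendsto_nhds ?_
    simpa [Real.sqrt_sq hh'.le] using
      (by fun_prop : Continuous fun ε : ℝ => √(h' ^ 2 - ε ^ 4 * (b ^ 2 - b' ^ 2))).tendsto 0
  have hsmall : ∀ᶠ ε : ℝ in 𝓝 0, ε ^ 4 * (b ^ 2 - b' ^ 2) < h' ^ 2 :=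
    (by fun_prop : Continuous fun ε : ℝ => ε ^ 4 * (b ^ 2 - b' ^ 2)).continuousAt.eventually_lt
      continuousAt_const (by simpa using pow_pos hh' 2)
  have hlim := (tendsto_div_mul_capProfile hs hh' hb.ne').sub
    (tendsto_div_mul_capProfile tendsto_const_nhds hh hb.ne')
  convert hlim.congr' ?_ using 2
  · ring
  filter_upwards [nhdsWithin_le_nhds hsmall, self_mem_nhdsWithin] with ε hε₄ (hε : 0 < ε)
  exact (Alam_inv_pow_three hε hb hh hε₄).symm

/-- `p^{(λ)}((b,h),(b',h')) → p^{(∞)}((b,h),(b',h')) = (4(b−b')b'/h'²) exp(−(2/3)b³(1/h'−1/h))`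
as `λ → ∞`; moreover for all sufficiently large `λ`, `(b', h') ∈ S_{(b,h)}`. -/
theorem plam_tendsto (b h b' h' : ℝ) (hb : 0 < b) (hh : 0 < h)
    (hb' : 0 < b') (hb'b : b' < b) (hh' : 0 < h') (hh'h : h' < h) :
    Tendsto (fun lam : ℝ => plam lam b h b' h') atTop
        (nhds (4 * (b - b') * b' / h' ^ 2 * Real.exp (-(2 / 3 * b ^ 3 * (1 / h' - 1 / h))))) ∧
      ∀ᶠ lam : ℝ in atTop, (b', h') ∈ Sset lam b h := by
  rw [← map_inv_pow_three_nhdsGT_zero, tendsto_map'_iff, eventually_map]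
  have hS := eventually_mem_Sset_inv_pow_three hb' hb'b hh' hh'h
  refine ⟨?_, hS⟩
  have hprefactor : ContinuousAt (fun ε : ℝ => 4 * b' / (h' ^ 2 + ε ^ 4 * b' ^ 2) *
      (b * (1 - ε ^ 4 * (b ^ 2 - b' ^ 2) / h' ^ 2) ^ (-(1 : ℝ) / 2) - b')) 0 := by
    fun_prop (disch := simp [hh'.ne'])
  have hexp := (continuous_exp.tendsto _).comp
    (tendsto_Alam_inv_pow_three (b' := b') hb hh hh').neg
  convert ((hprefactor.tendsto.mono_left nhdsWithin_le_nhds).mul hexp).congr' ?_ using 2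
  · simp
    ring
  filter_upwards [hS, self_mem_nhdsWithin] with ε hmem (hε : 0 < ε)
  simp [plam, Set.indicator_of_mem hmem, (inv_pow_three_rpow_thirds hε).2.2.2]
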